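/- Let R be a binary relation ("reduces to") on a type of states and let S be a state such that the set of states reachable from S via R* is finite and every state reachable from S is weakly terminating (can reach, via R*, a state with no R-successor). Then there is no infinite strongly fair run starting from S; equivalently, every maximal strongly fair reduction sequence starting from S is finite and ends in a state with no R-successor. -/
import Mathlib


/-- A state is terminal if it has no `R`-successor. -/
def Terminal {α : Type*} (R : α → α → Prop) (P : α) : Prop :=
  ∀ Q, ¬ R P Q

/-- A state `T` is weakly terminating if it can reach (via `R*`) a terminal state. -/
def WeaklyTerminating {α : Type*} (R : α → α → Prop) (T : α) : Prop :=
  ∃ U, Relation.ReflTransGen R T U ∧ Terminal R U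

/-- An infinite run σ is strongly fair if for all `T`, `U` with `T R U`,
whenever `T` occurs at infinitely many positions of σ, the consecutive pair
`(T, U)` also occurs at infinitely many positions of σ. -/
def StronglyFair {α : Type*} (R : α → α → Prop) (σ : ℕ → α) : Prop :=
  ∀ T U, R T U → {i | σ i = T}.Infinite →
    {i | σ i = T ∧ σ (i + 1) = U}.Infinite

/-- if the set of states reachable from `S` is finite and every
reachable state is weakly terminating, then there is no infinite strongly fair
run starting from `S`. -/
theorem no_infinite_strongly_fair_run
    {α : Type*} (R : α → α → Prop) (S : α)
    (hfin : {T | Relation.ReflTransGen R S T}.Finite)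
    (hwt : ∀ T, Relation.ReflTransGen R S T → WeaklyTerminating R T) :
    ¬ ∃ σ : ℕ → α, σ 0 = S ∧ (∀ i, R (σ i) (σ (i + 1))) ∧
        StronglyFair R σ := by
  rintro ⟨σ, h0, hstep, hfair⟩
  -- every σ i is reachable from S
  have hreach : ∀ i, Relation.ReflTransGen R S (σ i) := by
    intro i
    induction i with
    | zero => rw [h0]
    | succ n ih => exact ih.tail (hstep n)
  -- some state occurs infinitely often
  have hranfin : (Set.range σ).Finite :=
    hfin.subset (by rintro _ ⟨i, rfl⟩; exact hreach i)
  haveI := hranfin.to_subtype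
  obtain ⟨⟨T, hTmem⟩, hT⟩ :=
    Finite.exists_infinite_fiber (fun i => (⟨σ i, ⟨i, rfl⟩⟩ : Set.range σ))
  have hTinf : {i | σ i = T}.Infinite := by
    have hsub : ((fun i => (⟨σ i, ⟨i, rfl⟩⟩ : Set.range σ)) ⁻¹' {⟨T, hTmem⟩})
        ⊆ {i | σ i = T} := by
      intro i hi
      simpa [Subtype.ext_iff] using hi
    exact Set.Infinite.mono hsub (Set.infinite_coe_iff.mp hT)
  -- any state reachable from T occurs infinitely often
  have hprop : ∀ U, Relation.ReflTransGen R T U → {i | σ i = U}.Infinite := by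
    intro U hTU
    induction hTU with
    | refl => exact hTinf
    | @tail b c hbc hcd ih =>
      have hpairs := hfair b c hcd ih
      have himg : (fun i => i + 1) '' {i | σ i = b ∧ σ (i + 1) = c} ⊆ {i | σ i = c} := by
        rintro _ ⟨i, ⟨_, h2⟩, rfl⟩
        exact h2
      exact (hpairs.image ((add_left_injective 1).injOn)).mono himg
  -- pick an infinite T  and get terminal state occurring, contradiction
  obtain ⟨U, hTU, hterm⟩ := hwt T (by
    obtain ⟨i, hi⟩ := hTinf.nonempty
    exact hi ▸ hreach i)
  obtain ⟨i, hi⟩ := (hprop U hTU).nonempty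
  exact hterm (σ (i + 1)) (hi ▸ hstep i)
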